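/- For m > 1, the m-Dyck shift has no synchronizing words: for every admissible word w there exist admissible words u = α_i l w and v = w r β_j (with appropriate l, r and i ≠ j) such that the concatenation α_i l w r β_j is not admissible. -/

import Mathlib

/-- Symbols of the `m`-Dyck alphabet: `a j` is the opening bracket `α_j`,
`b j` is the closing bracket `β_j`. -/
inductive DSym (m : ℕ) : Type
  | a : Fin m → DSym m
  | b : Fin m → DSym m
  deriving DecidableEq

namespace Dyck

/-- One step of the stack evaluation computing the reduced form (canonical
representative in the syntactic monoid).  `none` is the zero of the monoid;
`some (bs, as)` is the reduced word `β_{bs} α_{as}` (unmatched closing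
brackets, then a stack of unmatched opening brackets). -/
def step {m : ℕ} : Option (List (Fin m) × List (Fin m)) → DSym m →
    Option (List (Fin m) × List (Fin m))
  | none, _ => none
  | some (bs, as), .a j => some (bs, j :: as)
  | some (bs, []), .b j => some (bs ++ [j], [])
  | some (bs, i :: as), .b j => if i = j then some (bs, as) else none

/-- The image of a word in the syntactic monoid `M` (in reduced form). -/
def eval {m : ℕ} (w : List (DSym m)) : Option (List (Fin m) × List (Fin m)) :=
  w.foldl step (some ([], []))

/-- A word is admissible (belongs to the Dyck language) iff it is nonzero mod `M`. -/
def Admissible {m : ℕ} (w : List (DSym m)) : Prop := eval w ≠ none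

/-- A word is balanced iff it is `≡ 1` mod `M`. -/
def Balanced {m : ℕ} (w : List (DSym m)) : Prop := eval w = some ([], [])

end Dyck

/-!
Reading a word `w` with `eval w = some (bs, as)` means `w ≡ β_bs α_as` in the syntactic monoid, so
`l = α_(bs reversed)` and `r = β_as` satisfy `l w r ≡ 1`. Then `α_i l w ≡ α_i α_as` and
`w r β_j ≡ β_bs β_j` are nonzero, while `α_i l w r β_j ≡ α_i β_j = 0` for `i ≠ j`.
-/

namespace Dyck

variable {m : ℕ}

lemma foldl_step_none (w : List (DSym m)) : w.foldl step none = none := by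
  induction w with
  | nil => rfl
  | cons x w ih => exact ih

lemma eval_append (u v : List (DSym m)) : eval (u ++ v) = v.foldl step (eval u) :=
  List.foldl_append

lemma eval_append_singleton (w : List (DSym m)) (x : DSym m) :
    eval (w ++ [x]) = step (eval w) x :=
  eval_append w [x]

/-- A word reduced to `β_bs α_as` consumes `bs` from the top of any stack and pushes `as`. -/
lemma foldl_step_of_eval_eq_some {w : List (DSym m)} {bs as : List (Fin m)}
    (h : eval w = some (bs, as)) (c t : List (Fin m)) :
    w.foldl step (some (c, bs ++ t)) = some (c, as ++ t) := by
  induction w using List.reverseRecOn generalizing bs as t with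
  | nil =>
    cases h
    rfl
  | append_singleton w x ih =>
    rw [eval_append_singleton] at h
    rw [List.foldl_append, List.foldl_cons, List.foldl_nil]
    rcases hw : eval w with _ | ⟨bs', as'⟩
    · simp [hw, step] at h
    rw [hw] at h
    rcases x with j | j
    · cases h
      rw [ih hw]
      rfl
    rcases as' with _ | ⟨i, as'⟩
    · cases h
      simpa [step] using congrArg (step · (DSym.b j)) (ih hw (j :: t))
    by_cases hij : i = j
    · subst hij
      simp only [step, if_true, Option.some.injEq, Prod.mk.injEq] at h
      rw [← h.1, ← h.2, ih hw]
      simp [step]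
    · simp [step, hij] at h

lemma foldl_step_map_a (xs c s : List (Fin m)) :
    (xs.map DSym.a).foldl step (some (c, s)) = some (c, xs.reverse ++ s) := by
  induction xs generalizing s with
  | nil => rfl
  | cons x xs ih => simpa [step] using ih (x :: s)

lemma foldl_step_map_b (xs c t : List (Fin m)) :
    (xs.map DSym.b).foldl step (some (c, xs ++ t)) = some (c, t) := by
  induction xs with
  | nil => rfl
  | cons x xs ih => simpa [step] using ih

lemma foldl_step_balancing {w : List (DSym m)} {bs as : List (Fin m)}
    (h : eval w = some (bs, as)) (c t : List (Fin m)) :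
    (bs.reverse.map DSym.a ++ w ++ as.map DSym.b).foldl step (some (c, t)) = some (c, t) := by
  rw [List.foldl_append, List.foldl_append, foldl_step_map_a, List.reverse_reverse,
    foldl_step_of_eval_eq_some h, foldl_step_map_b]

lemma Admissible.of_append {u v : List (DSym m)} (h : Admissible (u ++ v)) : Admissible u := by
  intro hu
  apply h
  rw [eval, List.foldl_append]
  exact hu ▸ foldl_step_none v

end Dyck

open Dyck in
/-- for `m > 1` the `m`-Dyck shift has no synchronizing words:
for every admissible `w` there are `i ≠ j` and words `l, r` with
`α_i l w` and `w r β_j` admissible but `α_i l w r β_j` not admissible. -/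
theorem stmt10 (m : ℕ) (hm : 1 < m) (w : List (DSym m))
    (hadm : Dyck.Admissible w) :
    ∃ (i j : Fin m) (l r : List (DSym m)), i ≠ j ∧
      Dyck.Admissible (DSym.a i :: (l ++ w)) ∧
      Dyck.Admissible (w ++ r ++ [DSym.b j]) ∧
      ¬ Dyck.Admissible (DSym.a i :: (l ++ w ++ r ++ [DSym.b j])) := by
  obtain ⟨⟨bs, as⟩, hw⟩ := Option.ne_none_iff_exists'.mp hadm
  let i : Fin m := ⟨0, by omega⟩
  let j : Fin m := ⟨1, hm⟩
  have hij : i ≠ j := by simp [i, j, Fin.ext_iff]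
  have hlwr : eval (DSym.a i :: (bs.reverse.map DSym.a ++ w ++ as.map DSym.b)) = some ([], [i]) :=
    foldl_step_balancing hw [] [i]
  refine ⟨i, j, bs.reverse.map DSym.a, as.map DSym.b, hij, ?_, ?_, ?_⟩
  · refine Admissible.of_append (v := as.map DSym.b) ?_
    rw [List.cons_append, Admissible, hlwr]
    simp
  · have hwr : eval (w ++ as.map DSym.b) = some (bs, []) := by
      rw [eval_append, hw, ← foldl_step_map_b as bs [], List.append_nil]
    rw [Admissible, eval_append_singleton, hwr]
    simp [step]
  · rw [Admissible, ← List.cons_append, eval_append_singleton, hlwr]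
    simp [step, hij]
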